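/- (Osgood-type lemma) Let T > 0, K > 0, a > 0 and let Q : [0,T] → [0,∞) be continuous and satisfy Q(t) ≤ a + K ∫₀ᵗ Q(s)(1 + log⁺(1/Q(s))) ds for all t ∈ [0,T], where log⁺(z) = max(log z, 0). Assume a ≤ 1. Then for all t ∈ [0,T], Q(t) ≤ e · a^{exp(−Kt)} (i.e. log(Q(t)) ≤ exp(−Kt) log a + (1 − exp(−Kt)), as long as Q stays ≤ 1). -/
import Mathlib

set_option maxHeartbeats 1000000

lemma stmt12_aux_mono {q b : ℝ} (hq : 0 ≤ q) (hqb : q ≤ b) (hb : b ≤ 1) :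
    q - q * Real.log q ≤ b - b * Real.log b := by
  have hmono : MonotoneOn (fun z : ℝ => z - z * Real.log z) (Set.Icc 0 1) := by
    apply monotoneOn_of_deriv_nonneg (convex_Icc 0 1)
    · exact (continuous_id.sub Real.continuous_mul_log).continuousOn
    · rw [interior_Icc]
      intro z hz
      exact ((hasDerivAt_id z).sub
        (Real.hasDerivAt_mul_log hz.1.ne')).differentiableAt.differentiableWithinAt
    · rw [interior_Icc]
      intro z hz
      have hd : HasDerivAt (fun z : ℝ => z - z * Real.log z) (1 - (Real.log z + 1)) z :=
        (hasDerivAt_id z).sub (Real.hasDerivAt_mul_log hz.1.ne')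
      rw [hd.deriv]
      have := Real.log_nonpos hz.1.le hz.2.le
      linarith
  exact hmono ⟨hq, hqb.trans hb⟩ ⟨hq.trans hqb, hb⟩ hqb

lemma stmt12_aux_eq {q : ℝ} (hq : 0 ≤ q) :
    q * (1 + max (Real.log (1 / q)) 0) = q + max (-(q * Real.log q)) 0 := by
  rcases eq_or_lt_of_le hq with h | h
  · simp [← h]
  · rw [one_div, Real.log_inv, mul_add, mul_one, mul_max_of_nonneg _ _ hq, mul_zero, mul_neg]

/-- Osgood-type lemma. Let `Q : [0,T] → [0,∞)` be continuous, bounded by `1`, and satisfy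
`Q(t) ≤ a + K ∫₀ᵗ Q(s)(1 + log⁺(1/Q(s))) ds` with `0 < a ≤ 1`, `K > 0`. Then for all
`t ∈ [0,T]`, `Q(t) ≤ e · a^{exp(-Kt)}`. -/
theorem stmt12 (T K a : ℝ) (hT : 0 < T) (hK : 0 < K) (ha : 0 < a) (ha1 : a ≤ 1)
    (Q : ℝ → ℝ) (hQc : ContinuousOn Q (Set.Icc 0 T))
    (hQ0 : ∀ t ∈ Set.Icc (0:ℝ) T, 0 ≤ Q t)
    (hQ1 : ∀ t ∈ Set.Icc (0:ℝ) T, Q t ≤ 1)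
    (hInt : ∀ t ∈ Set.Icc (0:ℝ) T,
      Q t ≤ a + K * ∫ s in (0:ℝ)..t, Q s * (1 + max (Real.log (1 / Q s)) 0)) :
    ∀ t ∈ Set.Icc (0:ℝ) T, Q t ≤ Real.exp 1 * a ^ Real.exp (-K * t) := by
  have hT0 : (0:ℝ) ≤ T := hT.le
  -- globally continuous extension of `Q`
  set Qe : ℝ → ℝ := fun s => Q (max 0 (min s T)) with hQedef
  have hQecont : Continuous Qe := by
    apply hQc.comp_continuous (continuous_const.max (continuous_id.min continuous_const))
    intro x
    exact ⟨le_max_left _ _, max_le hT0 (min_le_right _ _)⟩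
  have hQeeq : ∀ s ∈ Set.Icc (0:ℝ) T, Qe s = Q s := by
    intro s hs
    simp only [hQedef]
    rw [min_eq_left hs.2, max_eq_right hs.1]
  set g : ℝ → ℝ := fun s => Qe s + max (-(Qe s * Real.log (Qe s))) 0 with hgdef
  have hgcont : Continuous g :=
    hQecont.add ((Real.continuous_mul_log.comp hQecont).neg.max continuous_const)
  set φ : ℝ → ℝ := fun u => a + K * ∫ s in (0:ℝ)..u, g s with hφdef
  have hφ' : ∀ x : ℝ, HasDerivAt φ (K * g x) x := by
    intro x
    simp only [hφdef]
    exact (((hgcont.integral_hasStrictDerivAt 0 x).hasDerivAt).const_mul K).const_add a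
  have hφc : Continuous φ := continuous_iff_continuousAt.2 fun x => (hφ' x).continuousAt
  have hφ0 : φ 0 = a := by simp [hφdef]
  have hQφ : ∀ x ∈ Set.Icc (0:ℝ) T, Q x ≤ φ x := by
    intro x hx
    have h1 := hInt x hx
    have h2 : (∫ s in (0:ℝ)..x, Q s * (1 + max (Real.log (1 / Q s)) 0))
        = ∫ s in (0:ℝ)..x, g s := by
      apply intervalIntegral.integral_congr
      intro s hs
      have hs' : s ∈ Set.Icc (0:ℝ) T := by
        rw [Set.uIcc_of_le hx.1] at hs
        exact ⟨hs.1, hs.2.trans hx.2⟩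
      simp only [hgdef]
      rw [hQeeq s hs']
      exact stmt12_aux_eq (hQ0 s hs')
    rw [h2] at h1
    exact h1
  intro t ht
  have hEpos : 0 < Real.exp (-K * t) := Real.exp_pos _
  have hEt : Real.exp (-K * t) ≤ 1 := by
    apply Real.exp_le_one_iff.2
    nlinarith [ht.1]
  set L : ℝ := -Real.log a with hLdef
  have hL0 : 0 ≤ L := by
    have := Real.log_nonpos ha.le ha1
    rw [hLdef]; linarith
  have hRHS : Real.exp 1 * a ^ Real.exp (-K * t) = Real.exp (1 - L * Real.exp (-K * t)) := by
    rw [Real.rpow_def_of_pos ha, ← Real.exp_add]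
    congr 1
    rw [hLdef]; ring
  rw [hRHS]
  by_cases hcase : L * Real.exp (-K * t) ≤ 1
  · have h1 : (1:ℝ) ≤ Real.exp (1 - L * Real.exp (-K * t)) := Real.one_le_exp (by linarith)
    linarith [hQ1 t ht]
  · push_neg at hcase
    have hL1 : 1 < L := by nlinarith [hcase, hEt, hL0]
    set ε : ℝ := 1 / (2 * (L - 1)) with hεdef
    have hε : 0 < ε := by
      rw [hεdef]
      exact div_pos one_pos (by linarith)
    have hεL : ε * (2 * (L - 1)) = 1 := by
      rw [hεdef]
      exact one_div_mul_cancel (by nlinarith)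
    set c : ℝ := 1 + ε with hcdef
    have hc1 : 1 < c := by rw [hcdef]; linarith
    have hcL : 0 < c + L := by linarith
    set B : ℝ → ℝ := fun s => Real.exp (c - (c + L) * Real.exp (-K * s)) with hBdef
    have hB' : ∀ x : ℝ, HasDerivAt B (K * (c + L) * Real.exp (-K * x) * B x) x := by
      intro x
      have h1 : HasDerivAt (fun s : ℝ => -K * s) (-K) x := by
        simpa using (hasDerivAt_id x).const_mul (-K)
      have h2 : HasDerivAt (fun s : ℝ => Real.exp (-K * s)) (Real.exp (-K * x) * (-K)) x := h1.exp
      have h3 : HasDerivAt (fun s : ℝ => c - (c + L) * Real.exp (-K * s))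
          (-((c + L) * (Real.exp (-K * x) * (-K)))) x := (h2.const_mul (c + L)).const_sub c
      have h4 := h3.exp
      convert h4 using 1
      simp only [hBdef]
      ring
    have hmain : c * (1 - Real.exp (-K * t)) ≤ 1 := by
      rw [hcdef]
      nlinarith [hcase, hεL, hEt, hEpos, hε, hL1]
    have hB0 : B 0 = a := by
      have h0 : c - (c + L) * Real.exp (-K * 0) = Real.log a := by
        rw [mul_zero, Real.exp_zero, hLdef]; ring
      simp only [hBdef]
      rw [h0, Real.exp_log ha]
    have hbar : ∀ x ∈ Set.Icc (0:ℝ) t, φ x ≤ B x := by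
      apply image_le_of_deriv_right_lt_deriv_boundary (f' := fun x => K * g x)
        (B' := fun x => K * (c + L) * Real.exp (-K * x) * B x)
        hφc.continuousOn (fun x _ => (hφ' x).hasDerivWithinAt) (by rw [hφ0, hB0]) hB'
      intro x hx hfB
      have hx0 : 0 ≤ x := hx.1
      have hxt : x < t := hx.2
      have hxT : x ∈ Set.Icc (0:ℝ) T := ⟨hx0, hxt.le.trans ht.2⟩
      have hQx0 := hQ0 x hxT
      have hQx1 := hQ1 x hxT
      have hBpos : 0 < B x := Real.exp_pos _
      have hEx : Real.exp (-K * t) ≤ Real.exp (-K * x) := by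
        apply Real.exp_le_exp.2
        nlinarith [hxt.le]
      have h7 : c ≤ (c + L) * Real.exp (-K * t) := by nlinarith [hmain, hcase]
      have h6 : c ≤ (c + L) * Real.exp (-K * x) := by nlinarith [hcL]
      have hBle1 : B x ≤ 1 := by
        simp only [hBdef]
        exact Real.exp_le_one_iff.2 (by linarith)
      have hQB : Q x ≤ B x := hfB ▸ hQφ x hxT
      have hgx : g x = Q x - Q x * Real.log (Q x) := by
        have hnn : (0:ℝ) ≤ -(Q x * Real.log (Q x)) := by
          have := Real.log_nonpos hQx0 hQx1
          nlinarith
        simp only [hgdef]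
        rw [hQeeq x hxT, max_eq_left hnn]
        ring
      have hlogB : Real.log (B x) = c - (c + L) * Real.exp (-K * x) := by
        simp only [hBdef]
        exact Real.log_exp _
      have hmono := stmt12_aux_mono hQx0 hQB hBle1
      have h5 : B x - B x * Real.log (B x) < (c + L) * Real.exp (-K * x) * B x := by
        rw [hlogB]
        nlinarith [mul_pos hBpos (sub_pos.2 hc1), Real.exp_pos (-K * x)]
      have h8 := mul_lt_mul_of_pos_left (lt_of_le_of_lt hmono h5) hK
      show K * g x < K * (c + L) * Real.exp (-K * x) * B x
      calc K * g x = K * (Q x - Q x * Real.log (Q x)) := by rw [hgx]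
        _ < K * ((c + L) * Real.exp (-K * x) * B x) := h8
        _ = K * (c + L) * Real.exp (-K * x) * B x := by ring
    have hφt := hbar t ⟨ht.1, le_refl t⟩
    have hQt := hQφ t ht
    have hBt : B t ≤ Real.exp (1 - L * Real.exp (-K * t)) := by
      simp only [hBdef]
      apply Real.exp_le_exp.2
      nlinarith [hmain]
    linarith
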